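/- Let (X, Y, A) be jointly distributed with Y, A ∈ {0,1}, and assume the Markov chain X → Z → Ŷ where Z = f(X) and Ŷ = h(Z) ∈ {0,1}. Let D₀ and D₁ be the conditional distributions over X × Y given A = 0 and A = 1, let D_a^Y be the conditional distribution of Y given A = a, and let D_a^f be the conditional distribution of Z = f(X) given A = a. Then d_JS(D₀^Y, D₁^Y) ≤ √(Err₀(h ∘ f)) + d_JS(D₀^f, D₁^f) + √(Err₁(h ∘ f)). -/

import Mathlib

open MeasureTheory ProbabilityTheory
open scoped ENNReal

/-- Kullback–Leibler divergence (base-2 logarithm) between two mass functions,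
with the usual conventions `0 log 0 = 0`. -/
noncomputable def klFun {α : Type*} (P Q : α → ℝ≥0∞) : ℝ :=
  ∑' a, (P a).toReal * Real.logb 2 ((P a).toReal / (Q a).toReal)

/-- Jensen–Shannon divergence (base-2 logarithm):
`D_JS(P, Q) = (1/2) D_KL(P ‖ M) + (1/2) D_KL(Q ‖ M)` where `M = (P + Q)/2`. -/
noncomputable def jsFun {α : Type*} (P Q : α → ℝ≥0∞) : ℝ :=
  (klFun P (fun a => (P a + Q a) / 2) + klFun Q (fun a => (P a + Q a) / 2)) / 2

/-!
Write `W = h (f X)` and `d = √D_JS`. Since `d` is a metric,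
`d(Y₀, Y₁) ≤ d(Y₀, W₀) + d(W₀, W₁) + d(W₁, Y₁)` for the laws under `A = 0, 1`. The middle term is
at most `d(Z₀, Z₁)` because `W` is a function of `Z` (data processing, which for JS is the
log-sum inequality). For the outer terms, `D_JS` is bounded by the total variation distance, and
the law of `Y` differs from that of `W` by at most `Pr(Y ≠ W | A = a) = Errₐ`.

By Minkowski's inequality the metric property reduces to the single-atom inequality
`√ψ(p, q) ≤ √ψ(p, r) + √ψ(r, q)` for `ψ = jsTerm` (Endres–Schindelin). Its only nontrivial case
is `p ≤ r ≤ q`, where `t ↦ √ψ(r, t) - √ψ(p, t)` increases on `[r, ∞)` because `∂ₜ √ψ(x, t)`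
increases in `x`; after the substitution `u = x / (x + t)` this is a one-variable inequality
for the binary entropy.
-/

open Real Set

theorem mul_log_div_eq_mul_klFun {a y : ℝ} (hy : 0 < y) :
    a * log (a / y) = y * InformationTheory.klFun (a / y) + a - y := by
  rw [InformationTheory.klFun_apply]
  field_simp
  ring

theorem sub_le_mul_log_div {a y : ℝ} (ha : 0 ≤ a) (hy : 0 < y) : a - y ≤ a * log (a / y) := by
  rw [mul_log_div_eq_mul_klFun hy]
  nlinarith [InformationTheory.klFun_nonneg (div_nonneg ha hy.le)]

-- The hypothesis `a ≤ 2 * y`, here and below, is how the midpoint `y = (p + q) / 2` of JS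
-- dominates `a = p`; it rules out `y = 0 < a`, where `log (a / y)` would be a junk value.
theorem abs_mul_log_div_le {a y : ℝ} (ha : 0 ≤ a) (hay : a ≤ 2 * y) :
    |a * log (a / y)| ≤ a + y := by
  rcases ha.eq_or_lt with rfl | ha
  · simp; linarith
  have hy : 0 < y := by linarith
  have upper : a * log (a / y) ≤ a * log 2 :=
    mul_le_mul_of_nonneg_left (log_le_log (by positivity) (by rw [div_le_iff₀ hy]; linarith))
      ha.le
  rw [abs_le]
  constructor <;> nlinarith [sub_le_mul_log_div ha.le hy, log_two_lt_d9]

theorem summable_mul_log_div {ι : Type*} {a y : ι → ℝ} (ha : ∀ i, 0 ≤ a i)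
    (hay : ∀ i, a i ≤ 2 * y i) (hsa : Summable a) (hsy : Summable y) :
    Summable fun i => a i * log (a i / y i) :=
  Summable.of_norm_bounded (hsa.add hsy) fun i => abs_mul_log_div_le (ha i) (hay i)

theorem mul_log_add_sub_le_mul_log_div {a y c : ℝ} (ha : 0 ≤ a) (hay : a ≤ 2 * y) (hc : 0 < c) :
    a * log c + a - c * y ≤ a * log (a / y) := by
  rcases ha.eq_or_lt with rfl | ha
  · simp; nlinarith
  have hy : 0 < y := by linarith
  have := sub_le_mul_log_div ha.le (mul_pos hc hy)
  rw [log_div ha.ne' (by positivity), log_mul hc.ne' hy.ne'] at this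
  rw [log_div ha.ne' hy.ne']
  linarith

theorem tsum_mul_log_div_tsum_le {ι : Type*} {a y : ι → ℝ} (ha : ∀ i, 0 ≤ a i)
    (hay : ∀ i, a i ≤ 2 * y i) (hsa : Summable a) (hsy : Summable y) :
    (∑' i, a i) * log ((∑' i, a i) / ∑' i, y i) ≤ ∑' i, a i * log (a i / y i) := by
  rcases (tsum_nonneg ha).eq_or_lt with hA | hA
  · have ha0 : ∀ i, a i = 0 := fun i =>
      le_antisymm (hA ▸ hsa.le_tsum i fun j _ => ha j) (ha i)
    simp [ha0]
  have hY : 0 < ∑' i, y i := by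
    have := hsa.tsum_le_tsum (fun i => hay i) (hsy.mul_left 2)
    rw [tsum_mul_left] at this
    linarith
  set c := (∑' i, a i) / ∑' i, y i
  have hc : 0 < c := div_pos hA hY
  calc (∑' i, a i) * log c
      = ∑' i, (a i * log c + a i - c * y i) := by
        rw [(hsa.mul_right _ |>.add hsa).tsum_sub (hsy.mul_left c), (hsa.mul_right _).tsum_add hsa,
          tsum_mul_right, tsum_mul_left, div_mul_cancel₀ _ hY.ne']
        ring
    _ ≤ ∑' i, a i * log (a i / y i) :=
        ((hsa.mul_right _ |>.add hsa).sub (hsy.mul_left c)).tsum_le_tsum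
          (fun i => mul_log_add_sub_le_mul_log_div (ha i) (hay i) hc)
          (summable_mul_log_div ha hay hsa hsy)

-- The contribution `p log (2p / (p + q)) + q log (2q / (p + q))` of one atom to `2 ln 2 · D_JS`,
-- written so that it is continuous on all of `ℝ²`.
noncomputable def jsTerm (p q : ℝ) : ℝ :=
  p * log (2 * p) + q * log (2 * q) - (p + q) * log (p + q)

theorem jsTerm_symm (p q : ℝ) : jsTerm p q = jsTerm q p := by
  unfold jsTerm; ring_nf

theorem jsTerm_self (p : ℝ) : jsTerm p p = 0 := by
  unfold jsTerm; ring_nf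

theorem jsTerm_zero_right {p : ℝ} (hp : 0 ≤ p) : jsTerm p 0 = p * log 2 := by
  rcases hp.eq_or_lt with rfl | hp
  · simp [jsTerm]
  simp [jsTerm, log_mul two_ne_zero hp.ne']
  ring

theorem jsTerm_eq_mul_log_div {p q : ℝ} (hp : 0 ≤ p) (hq : 0 ≤ q) :
    jsTerm p q = p * log (p / ((p + q) / 2)) + q * log (q / ((p + q) / 2)) := by
  have key : ∀ x y : ℝ, 0 ≤ x → 0 < x + y →
      x * log (x / ((x + y) / 2)) = x * log (2 * x) - x * log (x + y) := by
    intro x y hx hxy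
    rcases hx.eq_or_lt with rfl | hx
    · simp
    rw [div_div_eq_mul_div, mul_comm x 2, log_div (by positivity) hxy.ne']
    ring
  rcases (add_nonneg hp hq).eq_or_lt with hpq | hpq
  · obtain ⟨rfl, rfl⟩ : p = 0 ∧ q = 0 := ⟨by linarith, by linarith⟩
    simp [jsTerm]
  rw [key p q hp hpq, add_comm p q, key q p hq (by linarith), jsTerm, add_comm p q]
  ring

theorem jsTerm_eq_mul_klFun {p q : ℝ} (hp : 0 ≤ p) (hq : 0 ≤ q) (hpq : 0 < p + q) :
    jsTerm p q = (p + q) / 2 * (InformationTheory.klFun (p / ((p + q) / 2)) +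
      InformationTheory.klFun (q / ((p + q) / 2))) := by
  rw [jsTerm_eq_mul_log_div hp hq, mul_log_div_eq_mul_klFun (by positivity),
    mul_log_div_eq_mul_klFun (by positivity)]
  ring

theorem jsTerm_nonneg {p q : ℝ} (hp : 0 ≤ p) (hq : 0 ≤ q) : 0 ≤ jsTerm p q := by
  rcases (add_nonneg hp hq).eq_or_lt with hpq | hpq
  · obtain ⟨rfl, rfl⟩ : p = 0 ∧ q = 0 := ⟨by linarith, by linarith⟩
    simp [jsTerm]
  have hm : 0 < (p + q) / 2 := by positivity
  have hklp := InformationTheory.klFun_nonneg (div_nonneg hp hm.le)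
  have hklq := InformationTheory.klFun_nonneg (div_nonneg hq hm.le)
  rw [jsTerm_eq_mul_klFun hp hq hpq]
  positivity

theorem jsTerm_pos {p q : ℝ} (hp : 0 ≤ p) (hq : 0 ≤ q) (hpq : p ≠ q) : 0 < jsTerm p q := by
  have hsum : 0 < p + q := (add_nonneg hp hq).lt_of_ne fun h => hpq (by linarith)
  have hm : 0 < (p + q) / 2 := by positivity
  have hp_ne_mid : p / ((p + q) / 2) ≠ 1 := fun h =>
    hpq (by rw [div_eq_one_iff_eq hm.ne'] at h; linarith)
  have hklp := (InformationTheory.klFun_nonneg (div_nonneg hp hm.le)).lt_of_ne'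
    ((InformationTheory.klFun_eq_zero_iff (div_nonneg hp hm.le)).not.2 hp_ne_mid)
  have hklq := InformationTheory.klFun_nonneg (div_nonneg hq hm.le)
  rw [jsTerm_eq_mul_klFun hp hq hsum]
  positivity

theorem jsTerm_tsum_le {ι : Type*} {p q : ι → ℝ} (hp : ∀ i, 0 ≤ p i) (hq : ∀ i, 0 ≤ q i)
    (hsp : Summable p) (hsq : Summable q) :
    jsTerm (∑' i, p i) (∑' i, q i) ≤ ∑' i, jsTerm (p i) (q i) := by
  have hpm : ∀ i, p i ≤ 2 * ((p i + q i) / 2) := fun i => by linarith [hq i]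
  have hqm : ∀ i, q i ≤ 2 * ((p i + q i) / 2) := fun i => by linarith [hp i]
  have hsm : Summable fun i => (p i + q i) / 2 := (hsp.add hsq).div_const 2
  have hmid : ∑' i, (p i + q i) / 2 = ((∑' i, p i) + ∑' i, q i) / 2 := by
    rw [tsum_div_const, hsp.tsum_add hsq]
  rw [jsTerm_eq_mul_log_div (tsum_nonneg hp) (tsum_nonneg hq), ← hmid,
    tsum_congr fun i => jsTerm_eq_mul_log_div (hp i) (hq i),
    (summable_mul_log_div hp hpm hsp hsm).tsum_add (summable_mul_log_div hq hqm hsq hsm)]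
  exact add_le_add (tsum_mul_log_div_tsum_le hp hpm hsp hsm)
    (tsum_mul_log_div_tsum_le hq hqm hsq hsm)

theorem jsTerm_add_le {p₁ p₂ q₁ q₂ : ℝ} (hp₁ : 0 ≤ p₁) (hp₂ : 0 ≤ p₂) (hq₁ : 0 ≤ q₁)
    (hq₂ : 0 ≤ q₂) : jsTerm (p₁ + p₂) (q₁ + q₂) ≤ jsTerm p₁ q₁ + jsTerm p₂ q₂ := by
  simpa [tsum_fintype, Fin.sum_univ_two] using
    jsTerm_tsum_le (p := ![p₁, p₂]) (q := ![q₁, q₂]) (Fin.forall_fin_two.2 ⟨hp₁, hp₂⟩)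
      (Fin.forall_fin_two.2 ⟨hq₁, hq₂⟩) .of_finite .of_finite

theorem jsTerm_le_abs_sub_mul_log_two {p q : ℝ} (hp : 0 ≤ p) (hq : 0 ≤ q) :
    jsTerm p q ≤ |p - q| * log 2 := by
  wlog hqp : q ≤ p generalizing p q
  · rw [jsTerm_symm, abs_sub_comm]
    exact this hq hp (by linarith)
  calc jsTerm p q = jsTerm ((p - q) + q) (0 + q) := by ring_nf
    _ ≤ jsTerm (p - q) 0 + jsTerm q q := jsTerm_add_le (by linarith) hq le_rfl hq
    _ = |p - q| * log 2 := by
        rw [jsTerm_zero_right (by linarith), jsTerm_self, abs_of_nonneg (by linarith), add_zero]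

theorem summable_jsTerm {ι : Type*} {p q : ι → ℝ} (hp : ∀ i, 0 ≤ p i) (hq : ∀ i, 0 ≤ q i)
    (hsp : Summable p) (hsq : Summable q) : Summable fun i => jsTerm (p i) (q i) := by
  have hsm : Summable fun i => (p i + q i) / 2 := (hsp.add hsq).div_const 2
  simp only [fun i => jsTerm_eq_mul_log_div (hp i) (hq i)]
  exact (summable_mul_log_div hp (fun i => by linarith [hq i]) hsp hsm).add
    (summable_mul_log_div hq (fun i => by linarith [hp i]) hsq hsm)

theorem continuous_jsTerm_left (q : ℝ) : Continuous fun p => jsTerm p q := by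
  have h : ∀ x : ℝ, x * log (2 * x) = 2 * x * log (2 * x) / 2 := fun x => by ring
  simp only [jsTerm, h]
  have := continuous_mul_log
  fun_prop

theorem hasDerivAt_jsTerm_left {p q : ℝ} (hp : p ≠ 0) (hpq : p + q ≠ 0) :
    HasDerivAt (fun x => jsTerm x q) (log (2 * p) - log (p + q)) p := by
  have h₁ : HasDerivAt (fun x => 2 * x * log (2 * x) / 2) (log (2 * p) + 1) p :=
    (((hasDerivAt_mul_log (mul_ne_zero two_ne_zero hp)).comp p
      ((hasDerivAt_id p).const_mul 2)).div_const 2).congr_deriv (by ring)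
  have h₂ := (hasDerivAt_mul_log hpq).comp p ((hasDerivAt_id' p).add_const q)
  have e : (fun x => jsTerm x q) =
      fun x => 2 * x * log (2 * x) / 2 + q * log (2 * q) - (x + q) * log (x + q) := by
    funext x; simp only [jsTerm]; ring
  rw [e]
  exact ((h₁.add_const _).sub h₂).congr_deriv (by ring)

theorem monotoneOn_jsTerm_left {q : ℝ} (hq : 0 ≤ q) :
    MonotoneOn (fun p => jsTerm p q) (Ici q) := by
  refine monotoneOn_of_hasDerivWithinAt_nonneg (f' := fun p => log (2 * p) - log (p + q))
    (convex_Ici q) (continuous_jsTerm_left q).continuousOn (fun p hp => ?_) fun p hp => ?_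
  all_goals rw [interior_Ici, mem_Ioi] at hp
  · exact (hasDerivAt_jsTerm_left (by linarith) (by linarith)).hasDerivWithinAt
  · exact sub_nonneg.2 (log_le_log (by linarith) (by linarith))

theorem antitoneOn_jsTerm_left (q : ℝ) :
    AntitoneOn (fun p => jsTerm p q) (Icc 0 q) := by
  refine antitoneOn_of_hasDerivWithinAt_nonpos (f' := fun p => log (2 * p) - log (p + q))
    (convex_Icc 0 q) (continuous_jsTerm_left q).continuousOn (fun p hp => ?_) fun p hp => ?_
  all_goals rw [interior_Icc, mem_Ioo] at hp
  · exact (hasDerivAt_jsTerm_left (by linarith) (by linarith)).hasDerivWithinAt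
  · exact sub_nonpos.2 (log_le_log (by linarith) (by linarith))

theorem two_mul_log_two_sub_binEntropy_le {u : ℝ} (hu₀ : 0 < u) (hu : u ≤ 1 / 2) :
    2 * (log 2 - binEntropy u) ≤ -(log (2 * u) * log (2 * (1 - u))) := by
  set φ : ℝ → ℝ := fun u => 2 * (log 2 - binEntropy u) + log (2 * u) * log (2 * (1 - u))
  have hmono : MonotoneOn φ (Ioc 0 (1 / 2)) := by
    refine monotoneOn_of_hasDerivWithinAt_nonneg
      (f' := fun u => (1 - 2 * u) * (log 2 - binEntropy u) / (u * (1 - u))) (convex_Ioc 0 _)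
      (fun u hu => ?_) (fun u hu => ?_) fun u hu => ?_
    · have : 2 * u ≠ 0 := by linarith [hu.1]
      have : 2 * (1 - u) ≠ 0 := by linarith [hu.2]
      exact ContinuousAt.continuousWithinAt (by fun_prop (disch := assumption))
    all_goals rw [interior_Ioc, mem_Ioo] at hu
    · have hL₁ := ((hasDerivAt_id' u).const_mul 2).log (by linarith)
      have hL₂ := (((hasDerivAt_id' u).const_sub 1).const_mul 2).log (by linarith)
      have hH := hasDerivAt_binEntropy hu.1.ne' (by linarith)
      refine ((((hH.const_sub (log 2)).const_mul 2).add (hL₁.mul hL₂)).congr_deriv ?_)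
        |>.hasDerivWithinAt
      have hu0 : u ≠ 0 := hu.1.ne'
      have h1u : 1 - u ≠ 0 := by linarith
      rw [binEntropy, log_inv, log_inv, log_mul two_ne_zero hu0, log_mul two_ne_zero h1u]
      field_simp
      ring
    · have hH := binEntropy_le_log_two (p := u)
      exact div_nonneg (mul_nonneg (by linarith) (by linarith))
        (mul_pos hu.1 (by linarith)).le
  have h := hmono ⟨hu₀, hu⟩ ⟨by norm_num, le_rfl⟩ hu
  simp only [φ, one_div, binEntropy_two_inv] at h
  norm_num at h
  linarith

theorem jsTerm_eq_mul_log_two_sub_binEntropy {p q : ℝ} (hp : 0 ≤ p) (hq : 0 ≤ q)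
    (hpq : 0 < p + q) : jsTerm p q = (p + q) * (log 2 - binEntropy (p / (p + q))) := by
  have key : ∀ x, 0 ≤ x → x * log (x / ((p + q) / 2)) = x * log 2 - x * log (x / (p + q))⁻¹ := by
    intro x hx
    rcases hx.eq_or_lt with rfl | hx
    · simp
    rw [show x / ((p + q) / 2) = 2 * (x / (p + q)) by rw [div_div_eq_mul_div]; ring,
      log_mul two_ne_zero (div_pos hx hpq).ne', log_inv]
    ring
  have hq' : 1 - p / (p + q) = q / (p + q) := by field_simp; ring
  rw [jsTerm_eq_mul_log_div hp hq, key p hp, key q hq, binEntropy, hq']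
  field_simp
  ring

theorem two_mul_jsTerm_div_le {x t : ℝ} (hx : 0 < x) (hxt : x ≤ t) :
    2 * jsTerm x t / (x + t) ≤ (log (2 * t) - log (x + t)) * (log (x + t) - log (2 * x)) := by
  have hs : 0 < x + t := by linarith
  have hu : x / (x + t) ≤ 1 / 2 := by rw [div_le_iff₀ hs]; linarith
  have h₁ : log (2 * t) - log (x + t) = log (2 * (1 - x / (x + t))) := by
    rw [← log_div (by linarith) hs.ne']
    congr 1
    field_simp
    ring
  have h₂ : log (x + t) - log (2 * x) = -log (2 * (x / (x + t))) := by
    rw [← neg_sub, ← log_div (by linarith) hs.ne', mul_div_assoc]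
  have h₃ : 2 * ((x + t) * (log 2 - binEntropy (x / (x + t)))) / (x + t)
      = 2 * (log 2 - binEntropy (x / (x + t))) := by
    field_simp
  rw [jsTerm_eq_mul_log_two_sub_binEntropy hx.le (by linarith) hs, h₁, h₂, h₃]
  linarith [two_mul_log_two_sub_binEntropy_le (div_pos hx hs) hu]

-- The function is `2 ∂ₜ √(jsTerm x t)`.
theorem monotoneOn_log_sub_div_sqrt_jsTerm {t : ℝ} (ht : 0 < t) :
    MonotoneOn (fun x => (log (2 * t) - log (x + t)) / √(jsTerm x t)) (Ico 0 t) := by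
  have hpos : ∀ x ∈ Ico 0 t, 0 < jsTerm x t := fun x hx => jsTerm_pos hx.1 ht.le hx.2.ne
  refine monotoneOn_of_hasDerivWithinAt_nonneg
    (f' := fun x => (-(x + t)⁻¹ * √(jsTerm x t) - (log (2 * t) - log (x + t)) *
      ((log (2 * x) - log (x + t)) / (2 * √(jsTerm x t)))) / √(jsTerm x t) ^ 2)
    (convex_Ico 0 t) (fun x hx => ?_) (fun x hx => ?_) fun x hx => ?_
  · have : x + t ≠ 0 := by linarith [hx.1]
    have : √(jsTerm x t) ≠ 0 := (sqrt_pos.2 (hpos x hx)).ne'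
    have := continuous_jsTerm_left t
    exact ContinuousAt.continuousWithinAt (by fun_prop (disch := assumption))
  all_goals rw [interior_Ico] at hx
  · have hS := (sqrt_pos.2 (hpos x ⟨hx.1.le, hx.2⟩)).ne'
    have hN := (((hasDerivAt_id' x).add_const t).log (by linarith [hx.1])).const_sub (log (2 * t))
    have hD := (hasDerivAt_jsTerm_left (q := t) hx.1.ne' (by linarith [hx.1])).sqrt
      (hpos x ⟨hx.1.le, hx.2⟩).ne'
    exact ((hN.div hD hS).congr_deriv (by simp)).hasDerivWithinAt
  · have hψ := hpos x ⟨hx.1.le, hx.2⟩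
    have hS := sqrt_pos.2 hψ
    have hxt : 0 < x + t := by linarith [hx.1]
    have key := two_mul_jsTerm_div_le hx.1 hx.2.le
    have e : -(x + t)⁻¹ * √(jsTerm x t) - (log (2 * t) - log (x + t)) *
        ((log (2 * x) - log (x + t)) / (2 * √(jsTerm x t))) =
        ((log (2 * t) - log (x + t)) * (log (x + t) - log (2 * x)) - 2 * jsTerm x t / (x + t)) /
          (2 * √(jsTerm x t)) := by
      have hS2 := sq_sqrt hψ.le
      set S := √(jsTerm x t)
      rw [← hS2]
      field_simp
      ring
    rw [e]
    exact div_nonneg (div_nonneg (sub_nonneg.2 key) (by positivity)) (sq_nonneg _)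

theorem continuous_sqrt_jsTerm_right (a : ℝ) : Continuous fun t => √(jsTerm a t) := by
  simpa only [jsTerm_symm a] using (continuous_jsTerm_left a).sqrt

theorem hasDerivAt_sqrt_jsTerm_right {a t : ℝ} (ha : 0 ≤ a) (hat : a < t) :
    HasDerivAt (fun t => √(jsTerm a t))
      ((log (2 * t) - log (a + t)) / √(jsTerm a t) / 2) t := by
  have hD := (hasDerivAt_jsTerm_left (q := a) (by linarith) (by linarith)).sqrt
    (jsTerm_pos (by linarith) ha hat.ne').ne'
  simp only [jsTerm_symm _ a] at hD
  exact hD.congr_deriv (by rw [add_comm t a]; ring)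

theorem monotoneOn_sqrt_jsTerm_sub {p r : ℝ} (hp : 0 ≤ p) (hpr : p ≤ r) :
    MonotoneOn (fun t => √(jsTerm r t) - √(jsTerm p t)) (Ici r) := by
  refine monotoneOn_of_hasDerivWithinAt_nonneg
    (f' := fun t => (log (2 * t) - log (r + t)) / √(jsTerm r t) / 2 -
      (log (2 * t) - log (p + t)) / √(jsTerm p t) / 2) (convex_Ici r)
    ((continuous_sqrt_jsTerm_right r).sub (continuous_sqrt_jsTerm_right p)).continuousOn
    (fun t ht => ?_) fun t ht => ?_
  all_goals rw [interior_Ici, mem_Ioi] at ht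
  · exact ((hasDerivAt_sqrt_jsTerm_right (hp.trans hpr) ht).sub
      (hasDerivAt_sqrt_jsTerm_right hp (hpr.trans_lt ht))).hasDerivWithinAt
  · have hG := monotoneOn_log_sub_div_sqrt_jsTerm (hp.trans_lt (hpr.trans_lt ht))
      ⟨hp, hpr.trans_lt ht⟩ ⟨hp.trans hpr, ht⟩ hpr
    exact sub_nonneg.2 (div_le_div_of_nonneg_right hG two_pos.le)

theorem sqrt_jsTerm_le_add {p q r : ℝ} (hp : 0 ≤ p) (hq : 0 ≤ q) (hr : 0 ≤ r) :
    √(jsTerm p q) ≤ √(jsTerm p r) + √(jsTerm r q) := by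
  wlog hpq : p ≤ q generalizing p q
  · have := this hq hp (by linarith)
    rw [jsTerm_symm q p, jsTerm_symm q r, jsTerm_symm r p] at this
    linarith
  rcases le_total r p with hrp | hpr
  · have : jsTerm p q ≤ jsTerm r q :=
      antitoneOn_jsTerm_left q ⟨hr, hrp.trans hpq⟩ ⟨hp, hpq⟩ hrp
    linarith [sqrt_le_sqrt this, sqrt_nonneg (jsTerm p r)]
  rcases le_total r q with hrq | hqr
  · have := monotoneOn_sqrt_jsTerm_sub hp hpr self_mem_Ici hrq hrq
    simp only [jsTerm_self, sqrt_zero, zero_sub] at this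
    linarith
  · have : jsTerm q p ≤ jsTerm r p := monotoneOn_jsTerm_left hp hpq (hpq.trans hqr) hqr
    rw [jsTerm_symm q, jsTerm_symm r] at this
    linarith [sqrt_le_sqrt this, sqrt_nonneg (jsTerm r q)]

theorem sqrt_tsum_le_add {ι : Type*} {a b c : ι → ℝ} (ha : ∀ i, 0 ≤ a i) (hb : ∀ i, 0 ≤ b i)
    (hc : ∀ i, 0 ≤ c i) (hsb : Summable b) (hsc : Summable c)
    (habc : ∀ i, √(a i) ≤ √(b i) + √(c i)) :
    √(∑' i, a i) ≤ √(∑' i, b i) + √(∑' i, c i) := by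
  have hsq : ∀ x : ι → ℝ, (∀ i, 0 ≤ x i) → (fun i => √(x i) ^ (2 : ℝ)) = x := fun x hx =>
    funext fun i => by rw [rpow_two, sq_sqrt (hx i)]
  obtain ⟨hsum, hmink⟩ := Real.Lp_add_le_tsum_of_nonneg one_le_two
    (fun i => sqrt_nonneg (b i)) (fun i => sqrt_nonneg (c i))
    (by rwa [hsq b hb]) (by rwa [hsq c hc])
  simp only [← sqrt_eq_rpow, rpow_two, fun i => sq_sqrt (hb i), fun i => sq_sqrt (hc i)]
    at hsum hmink
  have hle : ∀ i, a i ≤ (√(b i) + √(c i)) ^ 2 := fun i => by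
    rw [← sq_sqrt (ha i)]
    exact pow_le_pow_left₀ (sqrt_nonneg _) (habc i) 2
  exact (sqrt_le_sqrt ((Summable.of_nonneg_of_le ha hle hsum).tsum_le_tsum hle hsum)).trans hmink

section jsFun

variable {α : Type*} {P Q R : α → ℝ≥0∞}

theorem jsFun_comm (P Q : α → ℝ≥0∞) : jsFun P Q = jsFun Q P := by
  simp only [jsFun, add_comm (P _), add_comm (klFun P _)]

theorem jsFun_eq_tsum_jsTerm (hP : ∑' a, P a ≠ ∞) (hQ : ∑' a, Q a ≠ ∞) :
    jsFun P Q = ∑' a, jsTerm (P a).toReal (Q a).toReal / (2 * log 2) := by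
  set p := fun a => (P a).toReal
  set q := fun a => (Q a).toReal
  have hp : ∀ a, 0 ≤ p a := fun a => ENNReal.toReal_nonneg
  have hq : ∀ a, 0 ≤ q a := fun a => ENNReal.toReal_nonneg
  have hsm : Summable fun a => (p a + q a) / 2 :=
    ((ENNReal.summable_toReal hP).add (ENNReal.summable_toReal hQ)).div_const 2
  have hkl : ∀ R : α → ℝ≥0∞, klFun R (fun a => (P a + Q a) / 2) =
      (∑' a, (R a).toReal * log ((R a).toReal / ((p a + q a) / 2))) / log 2 := by
    intro R
    rw [klFun, ← tsum_div_const]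
    refine tsum_congr fun a => ?_
    rw [ENNReal.toReal_div, ENNReal.toReal_add (ENNReal.ne_top_of_tsum_ne_top hP a)
      (ENNReal.ne_top_of_tsum_ne_top hQ a), logb, mul_div_assoc]
    rfl
  have hsp := summable_mul_log_div hp (fun a => by linarith [hq a]) (ENNReal.summable_toReal hP) hsm
  have hsq := summable_mul_log_div hq (fun a => by linarith [hp a]) (ENNReal.summable_toReal hQ) hsm
  rw [jsFun, hkl P, hkl Q, ← add_div, ← hsp.tsum_add hsq, div_div, ← tsum_div_const, mul_comm]
  exact tsum_congr fun a => by rw [jsTerm_eq_mul_log_div (hp a) (hq a)]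

theorem sqrt_jsFun_le_add (hP : ∑' a, P a ≠ ∞) (hQ : ∑' a, Q a ≠ ∞) (hR : ∑' a, R a ≠ ∞) :
    √(jsFun P R) ≤ √(jsFun P Q) + √(jsFun Q R) := by
  rw [jsFun_eq_tsum_jsTerm hP hR, jsFun_eq_tsum_jsTerm hP hQ, jsFun_eq_tsum_jsTerm hQ hR]
  have hc : 0 < 2 * log 2 := by positivity
  have hnn : ∀ x : ℝ≥0∞, 0 ≤ x.toReal := fun _ => ENNReal.toReal_nonneg
  have hterm : ∀ x y : ℝ≥0∞, 0 ≤ jsTerm x.toReal y.toReal / (2 * log 2) := fun x y =>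
    div_nonneg (jsTerm_nonneg (hnn x) (hnn y)) hc.le
  refine sqrt_tsum_le_add (fun a => hterm _ _) (fun a => hterm _ _) (fun a => hterm _ _)
    ((summable_jsTerm (fun a => hnn _) (fun a => hnn _) (ENNReal.summable_toReal hP)
      (ENNReal.summable_toReal hQ)).div_const _)
    ((summable_jsTerm (fun a => hnn _) (fun a => hnn _) (ENNReal.summable_toReal hQ)
      (ENNReal.summable_toReal hR)).div_const _) fun a => ?_
  simp only [sqrt_div' _ hc.le, ← add_div]
  exact div_le_div_of_nonneg_right (sqrt_jsTerm_le_add (hnn _) (hnn _) (hnn _)) (sqrt_nonneg _)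

theorem jsFun_le_tsum_abs_sub (hP : ∑' a, P a ≠ ∞) (hQ : ∑' a, Q a ≠ ∞) :
    jsFun P Q ≤ (∑' a, |(P a).toReal - (Q a).toReal|) / 2 := by
  have hsP := ENNReal.summable_toReal hP
  have hsQ := ENNReal.summable_toReal hQ
  have hlog : 0 < log 2 := log_pos one_lt_two
  rw [jsFun_eq_tsum_jsTerm hP hQ, ← tsum_div_const]
  refine ((summable_jsTerm (fun a => ENNReal.toReal_nonneg) (fun a => ENNReal.toReal_nonneg)
    hsP hsQ).div_const _).tsum_le_tsum (fun a => ?_) ((hsP.sub hsQ).abs.div_const _)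
  rw [div_le_div_iff₀ (by positivity) two_pos]
  nlinarith [jsTerm_le_abs_sub_mul_log_two (P a).toReal_nonneg (Q a).toReal_nonneg]

theorem jsFun_tsum_fiberwise_le {β : Type*} (g : α → β) (hP : ∑' a, P a ≠ ∞)
    (hQ : ∑' a, Q a ≠ ∞) :
    jsFun (fun b => ∑' a : g ⁻¹' {b}, P a) (fun b => ∑' a : g ⁻¹' {b}, Q a) ≤ jsFun P Q := by
  have hnn : ∀ x : ℝ≥0∞, 0 ≤ x.toReal := fun _ => ENNReal.toReal_nonneg
  have hc : 0 < 2 * log 2 := by positivity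
  have hfib := ((summable_jsTerm (fun a => hnn (P a)) (fun a => hnn (Q a))
    (ENNReal.summable_toReal hP) (ENNReal.summable_toReal hQ)).div_const (2 * log 2)).hasSum
    |>.tsum_fiberwise g
  have hle : ∀ b, jsTerm (∑' a : g ⁻¹' {b}, P a).toReal (∑' a : g ⁻¹' {b}, Q a).toReal /
      (2 * log 2) ≤ ∑' a : g ⁻¹' {b}, jsTerm (P a).toReal (Q a).toReal / (2 * log 2) := by
    intro b
    rw [ENNReal.tsum_toReal_eq fun a => ENNReal.ne_top_of_tsum_ne_top hP _,
      ENNReal.tsum_toReal_eq fun a => ENNReal.ne_top_of_tsum_ne_top hQ _, tsum_div_const]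
    exact div_le_div_of_nonneg_right (jsTerm_tsum_le (fun a => hnn _) (fun a => hnn _)
      ((ENNReal.summable_toReal hP).subtype _) ((ENNReal.summable_toReal hQ).subtype _)) hc.le
  rw [jsFun_eq_tsum_jsTerm (by rwa [ENNReal.tsum_fiberwise]) (by rwa [ENNReal.tsum_fiberwise]),
    jsFun_eq_tsum_jsTerm hP hQ, ← hfib.tsum_eq]
  exact (Summable.of_nonneg_of_le (fun b => div_nonneg (jsTerm_nonneg (hnn _) (hnn _)) hc.le) hle
    hfib.summable).tsum_le_tsum hle hfib.summable

end jsFun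

section Measure

variable {Ω : Type*} [MeasurableSpace Ω] (ν : Measure Ω)

theorem integral_abs_ite_sub_ite {V W : Ω → Bool} (hV : Measurable V) (hW : Measurable W) :
    ∫ ω, |(if V ω then (1 : ℝ) else 0) - (if W ω then (1 : ℝ) else 0)| ∂ν =
      ν.real {ω | V ω ≠ W ω} := by
  have hset : MeasurableSet {ω | V ω ≠ W ω} := measurableSet_eq_fun hV hW |>.compl
  have hind : (fun ω => |(if V ω then (1 : ℝ) else 0) - (if W ω then (1 : ℝ) else 0)|) =
      {ω | V ω ≠ W ω}.indicator 1 := by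
    funext ω
    cases hv : V ω <;> cases hw : W ω <;> simp [indicator, hv, hw]
  rw [hind, integral_indicator_one hset]

theorem abs_measureReal_sub_le_measureReal_ne [IsFiniteMeasure ν] {β : Type*} (V W : Ω → β)
    (b : β) : |ν.real {ω | V ω = b} - ν.real {ω | W ω = b}| ≤ ν.real {ω | V ω ≠ W ω} := by
  have key : ∀ V W : Ω → β, ν.real {ω | V ω = b} ≤ ν.real {ω | W ω = b} + ν.real {ω | V ω ≠ W ω} :=
    fun V W => (measureReal_mono fun ω (hω : V ω = b) => by
      by_cases h : V ω = W ω
      · exact Or.inl (h ▸ hω : W ω = b)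
      · exact Or.inr h).trans (measureReal_union_le _ _)
  have hsymm : {ω | W ω ≠ V ω} = {ω | V ω ≠ W ω} := by simp only [ne_comm]
  rw [abs_sub_le_iff]
  constructor <;> linarith [key V W, hsymm ▸ key W V]

theorem tsum_measure_eq_ne_top [IsFiniteMeasure ν] {β : Type*} [Countable β] [MeasurableSpace β]
    [MeasurableSingletonClass β] {V : Ω → β} (hV : Measurable V) :
    ∑' b, ν {ω | V ω = b} ≠ ∞ := by
  calc ∑' b, ν {ω | V ω = b} = ν (V ⁻¹' univ) := by
        rw [← tsum_univ]
        exact tsum_measure_preimage_singleton countable_univ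
          fun b _ => hV (measurableSet_singleton b)
    _ ≠ ∞ := measure_ne_top ν _

theorem jsFun_law_le_measureReal_ne [IsFiniteMeasure ν] (V W : Ω → Bool) :
    jsFun (fun b => ν {ω | V ω = b}) (fun b => ν {ω | W ω = b}) ≤ ν.real {ω | V ω ≠ W ω} := by
  have hfin : ∀ U : Ω → Bool, ∑' b, ν {ω | U ω = b} ≠ ∞ := fun U => by
    simp [measure_ne_top]
  refine (jsFun_le_tsum_abs_sub (hfin V) (hfin W)).trans ?_
  simp only [tsum_bool, ← measureReal_def]
  linarith [abs_measureReal_sub_le_measureReal_ne ν V W false,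
    abs_measureReal_sub_le_measureReal_ne ν V W true]

theorem jsFun_law_comp_le (ν₀ ν₁ : Measure Ω) [IsFiniteMeasure ν₀] [IsFiniteMeasure ν₁]
    {𝒵 β : Type*} [Countable 𝒵] [MeasurableSpace 𝒵] [MeasurableSingletonClass 𝒵] {Z : Ω → 𝒵}
    (hZ : Measurable Z) (g : 𝒵 → β) :
    jsFun (fun b => ν₀ {ω | g (Z ω) = b}) (fun b => ν₁ {ω | g (Z ω) = b}) ≤
      jsFun (fun z => ν₀ {ω | Z ω = z}) (fun z => ν₁ {ω | Z ω = z}) := by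
  have hfiber : ∀ (ρ : Measure Ω) (b : β),
      ρ {ω | g (Z ω) = b} = ∑' z : g ⁻¹' {b}, ρ {ω | Z ω = z} := fun ρ b =>
    (tsum_measure_preimage_singleton (μ := ρ) (s := g ⁻¹' {b}) (to_countable _)
      fun z _ => hZ (measurableSet_singleton z)).symm
  simp only [hfiber]
  exact jsFun_tsum_fiberwise_le (P := fun z => ν₀ {ω | Z ω = z}) (Q := fun z => ν₁ {ω | Z ω = z})
    g (tsum_measure_eq_ne_top ν₀ hZ) (tsum_measure_eq_ne_top ν₁ hZ)

end Measure

theorem js_key_lemma_general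
    {Ω 𝒳 𝒵 : Type*} [MeasurableSpace Ω] [MeasurableSpace 𝒵]
    [MeasurableSingletonClass 𝒵] [Countable 𝒵]
    (μ : Measure Ω)
    (X : Ω → 𝒳) (Y A : Ω → Bool) (f : 𝒳 → 𝒵) (h : 𝒵 → Bool)
    (hY : Measurable Y)
    (hfX : Measurable (fun ω => f (X ω))) :
    Real.sqrt (jsFun
        (fun b => (ProbabilityTheory.cond μ {ω | A ω = false}) {ω | Y ω = b})
        (fun b => (ProbabilityTheory.cond μ {ω | A ω = true}) {ω | Y ω = b}))
      ≤ Real.sqrt (∫ ω, |(if Y ω then (1:ℝ) else 0) -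
            (if h (f (X ω)) then (1:ℝ) else 0)| ∂(ProbabilityTheory.cond μ {ω' | A ω' = false}))
        + Real.sqrt (jsFun
            (fun z => (ProbabilityTheory.cond μ {ω | A ω = false}) {ω | f (X ω) = z})
            (fun z => (ProbabilityTheory.cond μ {ω | A ω = true}) {ω | f (X ω) = z}))
        + Real.sqrt (∫ ω, |(if Y ω then (1:ℝ) else 0) -
            (if h (f (X ω)) then (1:ℝ) else 0)| ∂(ProbabilityTheory.cond μ {ω' | A ω' = true})) := by
  set ν₀ := cond μ {ω | A ω = false}
  set ν₁ := cond μ {ω | A ω = true}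
  have hW : Measurable fun ω => h (f (X ω)) := (measurable_of_countable h).comp hfX
  rw [integral_abs_ite_sub_ite ν₀ hY hW, integral_abs_ite_sub_ite ν₁ hY hW]
  have hY₀W₀ := sqrt_le_sqrt (jsFun_law_le_measureReal_ne ν₀ Y fun ω => h (f (X ω)))
  have hW₁Y₁ := sqrt_le_sqrt (jsFun_law_le_measureReal_ne ν₁ Y fun ω => h (f (X ω)))
  rw [jsFun_comm] at hW₁Y₁
  have hW₀W₁ := sqrt_le_sqrt (jsFun_law_comp_le ν₀ ν₁ hfX h)
  have hY₀Y₁ := sqrt_jsFun_le_add (tsum_measure_eq_ne_top ν₀ hY) (tsum_measure_eq_ne_top ν₀ hW)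
    (tsum_measure_eq_ne_top ν₁ hY)
  have hW₀Y₁ := sqrt_jsFun_le_add (tsum_measure_eq_ne_top ν₀ hW) (tsum_measure_eq_ne_top ν₁ hW)
    (tsum_measure_eq_ne_top ν₁ hY)
  linarith

/-- key lemma: with the Markov chain `X → Z = f(X) → Ŷ = h(Z)`,
`d_JS(D₀^Y, D₁^Y) ≤ √(Err₀(h∘f)) + d_JS(D₀^f, D₁^f) + √(Err₁(h∘f))`, where
`D_a^Y` (resp. `D_a^f`) is the conditional distribution of `Y` (resp. `Z = f(X)`)
given `A = a`, and `Err_a(h∘f) = E[|Y - h(f(X))| | A = a]`. -/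
theorem js_key_lemma
    {Ω 𝒳 𝒵 : Type*} [MeasurableSpace Ω] [MeasurableSpace 𝒵]
    [MeasurableSingletonClass 𝒵] [Countable 𝒵]
    (μ : Measure Ω) [IsProbabilityMeasure μ]
    (X : Ω → 𝒳) (Y A : Ω → Bool) (f : 𝒳 → 𝒵) (h : 𝒵 → Bool)
    (hY : Measurable Y) (hA : Measurable A)
    (hfX : Measurable (fun ω => f (X ω)))
    (hA0 : μ {ω | A ω = false} ≠ 0) (hA1 : μ {ω | A ω = true} ≠ 0) :
    Real.sqrt (jsFun
        (fun b => (ProbabilityTheory.cond μ {ω | A ω = false}) {ω | Y ω = b})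
        (fun b => (ProbabilityTheory.cond μ {ω | A ω = true}) {ω | Y ω = b}))
      ≤ Real.sqrt (∫ ω, |(if Y ω then (1:ℝ) else 0) -
            (if h (f (X ω)) then (1:ℝ) else 0)| ∂(ProbabilityTheory.cond μ {ω' | A ω' = false}))
        + Real.sqrt (jsFun
            (fun z => (ProbabilityTheory.cond μ {ω | A ω = false}) {ω | f (X ω) = z})
            (fun z => (ProbabilityTheory.cond μ {ω | A ω = true}) {ω | f (X ω) = z}))
        + Real.sqrt (∫ ω, |(if Y ω then (1:ℝ) else 0) -
            (if h (f (X ω)) then (1:ℝ) else 0)| ∂(ProbabilityTheory.cond μ {ω' | A ω' = true})) :=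
  js_key_lemma_general μ X Y A f h hY hfX
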